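/- Let W0 ∈ ℝ^{p×n} be the pretrained map, C_pres ∈ ℝ^{n×m} the preserved concept matrix, and U2 ∈ ℝ^{n×s} a matrix satisfying U2ᵀ C_pres = 0. Let c ∈ ℝ^n be a target concept with proxy c* ∈ ℝ^n, set x = U2ᵀ c and b = W0 (c* − c), and assume x ≠ 0. Define the double-projection update ΔW* = (1/‖x‖₂²) · (b xᵀ) U2ᵀ ∈ ℝ^{p×n}. Then (i) ΔW* C_pres = 0, so all columns of C_pres are exactly preserved by W0 + ΔW*, and (ii) (W0 + ΔW*) c = W0 c*, i.e., the target concept is exactly mapped to the proxy output. -/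

import Mathlib

/-! `ΔW*` factors through `U2ᵀ`, which annihilates `C_pres`. On `c` it is the rank-one map
`b xᵀ / ‖x‖₂²` applied to `x = U2ᵀ c`, which returns `b = W0 (c* − c)`. -/

open Matrix

noncomputable def vecEnorm {n : ℕ} (v : Fin n → ℝ) : ℝ :=
  ‖(WithLp.equiv 2 (Fin n → ℝ)).symm v‖

theorem vecEnorm_sq {n : ℕ} (v : Fin n → ℝ) : vecEnorm v ^ 2 = v ⬝ᵥ v := by
  rw [vecEnorm, EuclideanSpace.norm_eq, Real.sq_sqrt (by positivity)]
  simp [dotProduct, sq]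

namespace Matrix

variable {l m n o R : Type*}

theorem mulVec_col [Fintype m] [NonUnitalNonAssocSemiring R] (A : Matrix l m R)
    (C : Matrix m n R) (j : n) :
    (A *ᵥ fun i => C i j) = fun i => (A * C) i j :=
  rfl

theorem smul_vecMulVec_mul_transpose_mulVec [Fintype n] [Fintype o] [CommRing R] (r : R)
    (b : l → R) (x : o → R) (U : Matrix n o R) (c : n → R) :
    (r • (vecMulVec b x * Uᵀ)) *ᵥ c = (r * (x ⬝ᵥ Uᵀ *ᵥ c)) • b := by
  rw [smul_mulVec, ← mulVec_mulVec, vecMulVec_mulVec, op_smul_eq_smul, smul_smul]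

end Matrix

/-- **Double-projection update: exact preservation and exact erasure.**
With `U2ᵀ C_pres = 0`, `x = U2ᵀ c ≠ 0`, `b = W0 (c* − c)` and
`ΔW* = (b xᵀ / ‖x‖₂²) U2ᵀ`, one has (i) `ΔW* C_pres = 0`, so every column
of `C_pres` is preserved exactly by `W0 + ΔW*`, and
(ii) `(W0 + ΔW*) c = W0 c*`. -/
theorem double_projection_preserves_and_erases
    {p n m s : ℕ}
    (W0 : Matrix (Fin p) (Fin n) ℝ)
    (Cpres : Matrix (Fin n) (Fin m) ℝ)
    (U2 : Matrix (Fin n) (Fin s) ℝ)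
    (hU2 : U2ᵀ * Cpres = 0)
    (c cstar : Fin n → ℝ)
    (x : Fin s → ℝ) (hx : x = U2ᵀ.mulVec c) (hx0 : x ≠ 0)
    (b : Fin p → ℝ) (hb : b = W0.mulVec (cstar - c))
    (ΔW : Matrix (Fin p) (Fin n) ℝ)
    (hΔW : ΔW = (vecEnorm x ^ 2)⁻¹ • (Matrix.vecMulVec b x * U2ᵀ)) :
    ΔW * Cpres = 0 ∧
    (∀ j : Fin m, (W0 + ΔW).mulVec (fun i => Cpres i j) = W0.mulVec (fun i => Cpres i j)) ∧
    (W0 + ΔW).mulVec c = W0.mulVec cstar := by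
  have hxx : x ⬝ᵥ x ≠ 0 := mt dotProduct_self_eq_zero.mp hx0
  have hpres : ΔW * Cpres = 0 := by
    rw [hΔW, smul_mul, Matrix.mul_assoc, hU2, Matrix.mul_zero, smul_zero]
  refine ⟨hpres, fun j => ?_, ?_⟩
  · rw [add_mulVec, mulVec_col ΔW, hpres]
    exact add_zero _
  · rw [add_mulVec, hΔW, smul_vecMulVec_mul_transpose_mulVec, ← hx, vecEnorm_sq,
      inv_mul_cancel₀ hxx, one_smul, hb, mulVec_sub, add_sub_cancel]
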